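/- arXiv:2006.11561 — 4 statements merged into one kernel-verified Lean document; each statement's English description precedes it below -/
import Mathlib

section
/- Let (X_k)_{k≥1} be a martingale difference sequence adapted to a filtration (F_k)_{k≥0} on a probability space, and let τ > 0 be such that P[|X_k| > m] ≤ 2·e^{−m/(4τ)} for all k ≥ 1 and all m ≥ 0. Then for every δ ∈ (0,1), with probability at least 1 − δ, simultaneously for all integers K ≥ 1: ∑_{k=1}^K X_k ≤ 44·τ·√( K · (log(4K/δ))³ ). -/
/-!
Fix a horizon `K`, put `L = log (4K/δ)` and clip every `X k` to `[-M, M]` with `M = 12 τ L`.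
Recentring the clipped variables by their conditional means splits `X k = Z k + R k` on the event
that no `|X k|` exceeds `M`: the `Z k` are martingale differences bounded by `2M`, so
Azuma–Hoeffding (via the conditional Hoeffding lemma) controls `∑ Z k`, while the drift
`R k = E[clip (X k) | ℱ (k-1)] = E[clip (X k) - X k | ℱ (k-1)]` has `L¹` norm at most
`E (|X k| - M)⁺ ≤ 8 τ e^{-M/(4τ)}` by the tail assumption, so Markov controls `∑ R k`.
With the choice of `M` all three failure probabilities are `O(δ K^{-3/2})`, and a union bound
over `K`, using `∑ K^{-3/2} ≤ 3`, gives the bound simultaneously for all `K`.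
-/

open MeasureTheory ProbabilityTheory Finset Real

def clip (M x : ℝ) : ℝ := max (-M) (min M x)

lemma continuous_clip (M : ℝ) : Continuous (clip M) :=
  continuous_const.max (continuous_const.min continuous_id)

lemma abs_clip_le {M : ℝ} (hM : 0 ≤ M) (x : ℝ) : |clip M x| ≤ M :=
  abs_le.2 ⟨le_max_left _ _, max_le (by linarith) (min_le_left _ _)⟩

lemma clip_eq_self {M x : ℝ} (hx : |x| ≤ M) : clip M x = x := by
  obtain ⟨h1, h2⟩ := abs_le.1 hx
  rw [clip, min_eq_right h2, max_eq_right h1]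

lemma abs_clip_sub_self {M : ℝ} (hM : 0 ≤ M) (x : ℝ) : |clip M x - x| = max (|x| - M) 0 := by
  unfold clip
  rcases le_total x (-M) with h | h
  · rw [min_eq_right (by linarith), max_eq_left h, abs_of_nonneg (by linarith),
      abs_of_nonpos (by linarith), max_eq_left (by linarith)]
    ring
  rcases le_total M x with h' | h'
  · rw [min_eq_left h', max_eq_right (by linarith), abs_of_nonpos (by linarith),
      abs_of_nonneg (by linarith), max_eq_left (by linarith)]
    ring
  · rw [min_eq_right h', max_eq_right h, sub_self, abs_zero,
      max_eq_right (by linarith [abs_le.2 ⟨h, h'⟩])]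

lemma exp_le_cosh_add_mul_sinh_div {d w : ℝ} (hw : |w| ≤ d) :
    exp w ≤ cosh d + w * (sinh d / d) := by
  rcases (abs_nonneg w).trans hw |>.eq_or_lt with rfl | hd
  · simp [abs_nonpos_iff.1 hw]
  obtain ⟨h1, h2⟩ := abs_le.1 hw
  have hconv := convexOn_exp.2 (Set.mem_univ (-d)) (Set.mem_univ d)
    (div_nonneg (by linarith : 0 ≤ d - w) (by linarith : 0 ≤ 2 * d))
    (div_nonneg (by linarith : 0 ≤ d + w) (by linarith : 0 ≤ 2 * d))
    (by field_simp; ring)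
  have hw_eq : (d - w) / (2 * d) * -d + (d + w) / (2 * d) * d = w := by field_simp; ring
  simp only [smul_eq_mul, hw_eq] at hconv
  refine hconv.trans_eq ?_
  rw [cosh_eq, sinh_eq]
  field_simp
  ring

lemma one_div_mul_sqrt_succ_le {n : ℝ} (hn : 0 < n) :
    1 / ((n + 1) * √(n + 1)) ≤ 2 / √n - 2 / √(n + 1) := by
  have ha : 0 < √n := sqrt_pos.2 hn
  have hb : 0 < √(n + 1) := sqrt_pos.2 (by linarith)
  have hab : √n ≤ √(n + 1) := sqrt_le_sqrt (by linarith)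
  have hb2 : √(n + 1) ^ 2 = n + 1 := sq_sqrt (by linarith)
  have hb3 : (n + 1) * √(n + 1) = √(n + 1) ^ 3 := by rw [pow_succ, hb2]
  rw [div_sub_div _ _ ha.ne' hb.ne', div_le_div_iff₀ (by positivity) (by positivity), hb3]
  have ha2 : √n ^ 2 = n := sq_sqrt hn.le
  -- with `a = √n`, `b = √(n + 1)`: `(b - a) (a + b) = 1` and `a ≤ b` give `2 b² (b - a) ≥ a`
  have hkey : √n ≤ 2 * √(n + 1) ^ 2 * (√(n + 1) - √n) := by
    nlinarith [mul_le_mul hab hab ha.le hb.le, mul_pos ha hb]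
  nlinarith [mul_le_mul_of_nonneg_left hkey hb.le]

lemma sum_range_one_div_mul_sqrt_le (n : ℕ) : ∑ K ∈ range n, 1 / ((K : ℝ) * √K) ≤ 3 := by
  have htelescope (n : ℕ) (hn : 1 ≤ n) :
      ∑ K ∈ range (n + 1), 1 / ((K : ℝ) * √K) ≤ 3 - 2 / √n := by
    induction n, hn using Nat.le_induction with
    | base => norm_num [sum_range_succ]
    | succ n hn ih =>
      rw [sum_range_succ]
      have := one_div_mul_sqrt_succ_le (n := n) (by positivity)
      push_cast
      linarith
  calc _ ≤ ∑ K ∈ range (n + 1), 1 / ((K : ℝ) * √K) :=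
        sum_le_sum_of_subset_of_nonneg (range_subset_range.2 n.le_succ) fun _ _ _ => by positivity
  _ ≤ 3 := by
        rcases Nat.eq_zero_or_pos n with rfl | hn
        · norm_num
        · linarith [htelescope n hn, show 0 ≤ 2 / √(n : ℝ) by positivity]

lemma mul_exp_neg_add_div {b : ℝ} (hb : b ≠ 0) (a M t : ℝ) :
    a * exp (-(M + t) / b) = a * exp (-M / b) * exp (-b⁻¹ * t) := by
  rw [mul_assoc, ← exp_add]
  congr 2
  field_simp
  ring

lemma integral_mul_exp_neg_add_div_Ioi {a b : ℝ} (hb : 0 < b) (M : ℝ) :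
    ∫ t in Set.Ioi (0 : ℝ), a * exp (-(M + t) / b) = a * b * exp (-M / b) := by
  simp_rw [mul_exp_neg_add_div hb.ne' a M]
  rw [integral_const_mul, integral_exp_mul_Ioi (by simpa using hb)]
  field_simp
  simp

lemma integrableOn_mul_exp_neg_add_div_Ioi {a b : ℝ} (hb : 0 < b) (M : ℝ) :
    IntegrableOn (fun t : ℝ => a * exp (-(M + t) / b)) (Set.Ioi 0) := by
  simp_rw [mul_exp_neg_add_div hb.ne' a M]
  exact (integrableOn_exp_mul_Ioi (by simpa using hb) 0).const_mul _

section Probability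

variable {Ω : Type*} {m m0 : MeasurableSpace Ω} {μ : Measure Ω}

lemma condExp_exp_mul_le_of_abs_le [IsFiniteMeasure μ] (hm : m ≤ m0) {Z : Ω → ℝ}
    (hZ : Integrable Z μ) {c : ℝ} (hbd : ∀ᵐ ω ∂μ, |Z ω| ≤ c) (h0 : μ[Z | m] =ᵐ[μ] 0) (y : ℝ) :
    μ[fun ω => exp (y * Z ω) | m] ≤ᵐ[μ] fun _ => exp (y ^ 2 * c ^ 2 / 2) := by
  set d := |y| * c
  set a := y * (sinh d / d)
  have hlin : (fun ω => exp (y * Z ω)) ≤ᵐ[μ] fun ω => cosh d + a * Z ω := by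
    filter_upwards [hbd] with ω hω
    have := exp_le_cosh_add_mul_sinh_div (d := d) (w := y * Z ω)
      (by rw [abs_mul]; exact mul_le_mul_of_nonneg_left hω (abs_nonneg y))
    linarith
  have hint : Integrable (fun ω => exp (y * Z ω)) μ :=
    integrable_exp_mul_of_mem_Icc hZ.aemeasurable
      (a := -c) (b := c) (hbd.mono fun ω hω => abs_le.1 hω)
  have hlin_condExp : μ[fun ω => cosh d + a * Z ω | m] =ᵐ[μ] fun _ => cosh d := by
    change μ[(fun _ => cosh d) + a • Z | m] =ᵐ[μ] _
    filter_upwards [condExp_add (integrable_const (cosh d)) (hZ.smul a) m,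
      condExp_smul a Z m, h0] with ω h_add h_smul h_zero
    simp [h_add, h_smul, h_zero, condExp_const hm]
  have hcosh : cosh d ≤ exp (y ^ 2 * c ^ 2 / 2) := by
    simpa [d, mul_pow, sq_abs] using cosh_le_exp_half_sq d
  filter_upwards [condExp_mono hint ((integrable_const _).add (hZ.const_mul a)) hlin,
    hlin_condExp] with ω h_mono h_lin
  exact (h_mono.trans_eq h_lin).trans hcosh

lemma integral_mul_le_of_condExp_le (hm : m ≤ m0) [SigmaFinite (μ.trim hm)] {f g : Ω → ℝ}
    {C : ℝ} (hf : StronglyMeasurable[m] f) (hf0 : 0 ≤ f) (hfi : Integrable f μ)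
    (hgi : Integrable g μ) (hfgi : Integrable (f * g) μ) (hg : μ[g | m] ≤ᵐ[μ] fun _ => C) :
    ∫ ω, f ω * g ω ∂μ ≤ C * ∫ ω, f ω ∂μ := by
  have hpull := condExp_mul_of_stronglyMeasurable_left hf hfgi hgi
  calc ∫ ω, f ω * g ω ∂μ = ∫ ω, (f * μ[g | m]) ω ∂μ := by
        rw [← integral_condExp hm]; exact integral_congr_ae hpull
  _ ≤ ∫ ω, C * f ω ∂μ := by
        refine integral_mono_ae (integrable_condExp.congr hpull) (hfi.const_mul C) ?_
        filter_upwards [hg] with ω hω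
        simpa [mul_comm C] using mul_le_mul_of_nonneg_left hω (hf0 ω)
  _ = C * ∫ ω, f ω ∂μ := integral_const_mul C f

section Azuma

variable {ℱ : Filtration ℕ m0} {Z : ℕ → Ω → ℝ} {c : ℝ}

lemma stronglyMeasurable_sum_Icc (hmeas : ∀ k, 1 ≤ k → StronglyMeasurable[ℱ k] (Z k)) (n : ℕ) :
    StronglyMeasurable[ℱ n] fun ω => ∑ k ∈ Icc 1 n, Z k ω :=
  Finset.stronglyMeasurable_fun_sum _ fun k hk =>
    (hmeas k (mem_Icc.1 hk).1).mono (ℱ.mono (mem_Icc.1 hk).2)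

lemma ae_abs_sum_Icc_le (hbd : ∀ k, 1 ≤ k → ∀ᵐ ω ∂μ, |Z k ω| ≤ c) (n : ℕ) :
    ∀ᵐ ω ∂μ, |∑ k ∈ Icc 1 n, Z k ω| ≤ n * c := by
  have hall : ∀ᵐ ω ∂μ, ∀ k ∈ Icc 1 n, |Z k ω| ≤ c :=
    (ae_ball_iff (Icc 1 n).countable_toSet).2 fun k hk => hbd k (mem_Icc.1 hk).1
  filter_upwards [hall] with ω hω
  calc |∑ k ∈ Icc 1 n, Z k ω| ≤ ∑ k ∈ Icc 1 n, |Z k ω| := abs_sum_le_sum_abs _ _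
  _ ≤ ∑ k ∈ Icc 1 n, c := sum_le_sum hω
  _ = n * c := by simp

lemma integrable_exp_mul_sum_Icc [IsFiniteMeasure μ]
    (hmeas : ∀ k, 1 ≤ k → StronglyMeasurable[ℱ k] (Z k))
    (hbd : ∀ k, 1 ≤ k → ∀ᵐ ω ∂μ, |Z k ω| ≤ c) (y : ℝ) (n : ℕ) :
    Integrable (fun ω => exp (y * ∑ k ∈ Icc 1 n, Z k ω)) μ :=
  integrable_exp_mul_of_mem_Icc
    ((stronglyMeasurable_sum_Icc hmeas n).mono (ℱ.le n)).aestronglyMeasurable.aemeasurable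
    ((ae_abs_sum_Icc_le hbd n).mono fun _ hω => abs_le.1 hω)

lemma integral_exp_mul_sum_Icc_le [IsProbabilityMeasure μ]
    (hmeas : ∀ k, 1 ≤ k → StronglyMeasurable[ℱ k] (Z k))
    (hbd : ∀ k, 1 ≤ k → ∀ᵐ ω ∂μ, |Z k ω| ≤ c) (h0 : ∀ k, 1 ≤ k → μ[Z k | ℱ (k - 1)] =ᵐ[μ] 0)
    (y : ℝ) (n : ℕ) :
    ∫ ω, exp (y * ∑ k ∈ Icc 1 n, Z k ω) ∂μ ≤ exp (n * (y ^ 2 * c ^ 2 / 2)) := by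
  induction n with
  | zero => simp
  | succ n ih =>
    have hZ_int : Integrable (Z (n + 1)) μ :=
      Integrable.of_bound ((hmeas (n + 1) (by omega)).mono (ℱ.le _)).aestronglyMeasurable c
        (hbd (n + 1) (by omega))
    have hcond := condExp_exp_mul_le_of_abs_le (ℱ.le n) hZ_int (hbd (n + 1) (by omega))
      (h0 (n + 1) (by omega)) y
    have hsplit : (fun ω => exp (y * ∑ k ∈ Icc 1 (n + 1), Z k ω)) =
        (fun ω => exp (y * ∑ k ∈ Icc 1 n, Z k ω)) * fun ω => exp (y * Z (n + 1) ω) := by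
      ext ω
      rw [sum_Icc_succ_top (by omega), Pi.mul_apply, mul_add, exp_add]
    have hstep := integral_mul_le_of_condExp_le (ℱ.le n)
      (continuous_exp.comp_stronglyMeasurable ((stronglyMeasurable_sum_Icc hmeas n).const_mul y))
      (fun ω => (exp_pos _).le) (integrable_exp_mul_sum_Icc hmeas hbd y n)
      (integrable_exp_mul_of_mem_Icc hZ_int.aemeasurable
        ((hbd (n + 1) (by omega)).mono fun _ hω => abs_le.1 hω))
      (hsplit ▸ integrable_exp_mul_sum_Icc hmeas hbd y (n + 1)) hcond
    calc ∫ ω, exp (y * ∑ k ∈ Icc 1 (n + 1), Z k ω) ∂μ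
        ≤ exp (y ^ 2 * c ^ 2 / 2) * ∫ ω, exp (y * ∑ k ∈ Icc 1 n, Z k ω) ∂μ := by
          rw [hsplit]; exact hstep
    _ ≤ exp (y ^ 2 * c ^ 2 / 2) * exp (n * (y ^ 2 * c ^ 2 / 2)) := by gcongr
    _ = exp ((n + 1 : ℕ) * (y ^ 2 * c ^ 2 / 2)) := by rw [← exp_add]; push_cast; ring_nf

theorem measureReal_le_sum_Icc_le [IsProbabilityMeasure μ]
    (hmeas : ∀ k, 1 ≤ k → StronglyMeasurable[ℱ k] (Z k))
    (hbd : ∀ k, 1 ≤ k → ∀ᵐ ω ∂μ, |Z k ω| ≤ c) (h0 : ∀ k, 1 ≤ k → μ[Z k | ℱ (k - 1)] =ᵐ[μ] 0)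
    (n : ℕ) {t : ℝ} (ht : 0 ≤ t) :
    μ.real {ω | t ≤ ∑ k ∈ Icc 1 n, Z k ω} ≤ exp (-t ^ 2 / (2 * n * c ^ 2)) := by
  -- the Chernoff bound at the optimal `y`; when `n c² = 0` both `y` and the exponent are junk `0`
  set y := t / (n * c ^ 2)
  calc μ.real {ω | t ≤ ∑ k ∈ Icc 1 n, Z k ω}
      ≤ exp (-y * t) * mgf (fun ω => ∑ k ∈ Icc 1 n, Z k ω) μ y :=
        measure_ge_le_exp_mul_mgf t (by positivity) (integrable_exp_mul_sum_Icc hmeas hbd y n)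
  _ ≤ exp (-y * t) * exp (n * (y ^ 2 * c ^ 2 / 2)) := by
        gcongr; exact integral_exp_mul_sum_Icc_le hmeas hbd h0 y n
  _ = exp (-t ^ 2 / (2 * n * c ^ 2)) := by
        rw [← exp_add]
        congr 1
        rcases eq_or_ne ((n : ℝ) * c ^ 2) 0 with h | h
        · simp [y, h, mul_assoc]
        · simp only [y]; field_simp; ring

end Azuma

lemma integral_max_abs_sub_le_of_measure_lt_abs_le {f : Ω → ℝ} (hf : Integrable f μ) {a b M : ℝ}
    (ha : 0 ≤ a) (hb : 0 < b) (hM : 0 ≤ M)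
    (htail : ∀ r : ℝ, 0 ≤ r → μ {ω | r < |f ω|} ≤ ENNReal.ofReal (a * exp (-r / b))) :
    ∫ ω, max (|f ω| - M) 0 ∂μ ≤ a * b * exp (-M / b) := by
  set g : Ω → ℝ := fun ω => max (|f ω| - M) 0
  have hg0 : 0 ≤ᵐ[μ] g := .of_forall fun ω => le_max_right _ _
  have hg_meas : AEMeasurable g μ := by
    have := hf.aemeasurable
    fun_prop
  have hgi : Integrable g μ :=
    hf.abs.mono' hg_meas.aestronglyMeasurable (.of_forall fun ω => by
      rw [norm_of_nonneg (le_max_right _ _)]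
      exact max_le (by linarith) (abs_nonneg _))
  have hlevel : ∀ t ∈ Set.Ioi (0 : ℝ),
      μ {ω | t < g ω} ≤ ENNReal.ofReal (a * exp (-(M + t) / b)) := by
    intro t ht
    have hset : {ω | t < g ω} = {ω | M + t < |f ω|} := by
      ext ω
      simp only [Set.mem_ofPred_eq, g, lt_max_iff]
      constructor
      · rintro (h | h) <;> linarith [Set.mem_Ioi.1 ht]
      · intro h; left; linarith
    rw [hset]
    exact htail _ (by linarith [Set.mem_Ioi.1 ht])
  rw [← ENNReal.ofReal_le_ofReal_iff (by positivity), ← integral_mul_exp_neg_add_div_Ioi hb,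
    ofReal_integral_eq_lintegral_ofReal hgi hg0, lintegral_eq_lintegral_meas_lt μ hg0 hg_meas,
    ofReal_integral_eq_lintegral_ofReal (integrableOn_mul_exp_neg_add_div_Ioi hb M)
      (.of_forall fun t => by positivity)]
  exact setLIntegral_mono' measurableSet_Ioi hlevel

lemma integral_abs_condExp_le_integral_abs_sub {X Y : Ω → ℝ} (hX : Integrable X μ)
    (hY : Integrable Y μ) (h0 : μ[X | m] =ᵐ[μ] 0) :
    ∫ ω, |μ[Y | m] ω| ∂μ ≤ ∫ ω, |Y ω - X ω| ∂μ := by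
  have h : μ[Y - X | m] =ᵐ[μ] μ[Y | m] := by
    filter_upwards [condExp_sub hY hX m, h0] with ω h_sub h_zero
    simp [h_sub, h_zero]
  calc ∫ ω, |μ[Y | m] ω| ∂μ = ∫ ω, |μ[Y - X | m] ω| ∂μ :=
        integral_congr_ae (h.mono fun ω hω => by simp only [hω])
  _ ≤ ∫ ω, |(Y - X) ω| ∂μ := integral_abs_condExp_le _

lemma condExp_sub_condExp_ae_eq_zero (hm : m ≤ m0) [SigmaFinite (μ.trim hm)] {Y : Ω → ℝ}
    (hY : Integrable Y μ) : μ[Y - μ[Y | m] | m] =ᵐ[μ] 0 := by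
  filter_upwards [condExp_sub hY integrable_condExp m] with ω hω
  rw [hω, Pi.sub_apply, condExp_of_stronglyMeasurable hm stronglyMeasurable_condExp
    integrable_condExp, sub_self, Pi.zero_apply]

lemma integral_abs_condExp_clip_le [IsFiniteMeasure μ] {X : Ω → ℝ} (hX : Integrable X μ)
    (h0 : μ[X | m] =ᵐ[μ] 0) {a b M : ℝ} (ha : 0 ≤ a) (hb : 0 < b) (hM : 0 ≤ M)
    (htail : ∀ r : ℝ, 0 ≤ r → μ {ω | r < |X ω|} ≤ ENNReal.ofReal (a * exp (-r / b))) :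
    ∫ ω, |μ[fun ω => clip M (X ω) | m] ω| ∂μ ≤ a * b * exp (-M / b) := by
  have hclip_int : Integrable (fun ω => clip M (X ω)) μ :=
    .of_bound ((continuous_clip M).comp_aestronglyMeasurable hX.aestronglyMeasurable) M
      (.of_forall fun ω => abs_clip_le hM _)
  calc _ ≤ ∫ ω, |clip M (X ω) - X ω| ∂μ :=
        integral_abs_condExp_le_integral_abs_sub hX hclip_int h0
  _ ≤ a * b * exp (-M / b) := by
        simp only [abs_clip_sub_self hM]
        exact integral_max_abs_sub_le_of_measure_lt_abs_le hX ha hb hM htail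

lemma measureReal_le_sum_Icc_abs_le {f : ℕ → Ω → ℝ} (hf : ∀ k, Integrable (f k) μ) {C s : ℝ}
    (hs : 0 < s) (K : ℕ) (hC : ∀ k ∈ Icc 1 K, ∫ ω, |f k ω| ∂μ ≤ C) :
    μ.real {ω | s ≤ ∑ k ∈ Icc 1 K, |f k ω|} ≤ K * C / s := by
  rw [le_div_iff₀ hs, mul_comm]
  calc s * μ.real {ω | s ≤ ∑ k ∈ Icc 1 K, |f k ω|} ≤ ∫ ω, ∑ k ∈ Icc 1 K, |f k ω| ∂μ :=
        mul_meas_ge_le_integral_of_nonneg (.of_forall fun ω => sum_nonneg fun k _ => abs_nonneg _)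
          (integrable_finsetSum _ fun k _ => (hf k).abs) s
  _ = ∑ k ∈ Icc 1 K, ∫ ω, |f k ω| ∂μ := integral_finsetSum _ fun k _ => (hf k).abs
  _ ≤ ∑ k ∈ Icc 1 K, C := sum_le_sum hC
  _ = K * C := by simp

theorem measureReal_lt_sum_Icc_le [IsProbabilityMeasure μ] {ℱ : Filtration ℕ m0}
    {X : ℕ → Ω → ℝ} (hmeas : ∀ k, 1 ≤ k → StronglyMeasurable[ℱ k] (X k))
    (hint : ∀ k, 1 ≤ k → Integrable (X k) μ) (hmds : ∀ k, 1 ≤ k → μ[X k | ℱ (k - 1)] =ᵐ[μ] 0)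
    {a b : ℝ} (ha : 0 ≤ a) (hb : 0 < b)
    (htail : ∀ k, 1 ≤ k → ∀ m : ℝ, 0 ≤ m →
      μ {ω | m < |X k ω|} ≤ ENNReal.ofReal (a * exp (-m / b)))
    (K : ℕ) {M t s : ℝ} (hM : 0 ≤ M) (ht : 0 ≤ t) (hs : 0 < s) :
    μ.real {ω | t + s < ∑ k ∈ Icc 1 K, X k ω} ≤
      K * (a * exp (-M / b)) + exp (-t ^ 2 / (2 * K * (2 * M) ^ 2)) +
        K * (a * b * exp (-M / b)) / s := by
  set Y : ℕ → Ω → ℝ := fun k ω => clip M (X k ω)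
  set R : ℕ → Ω → ℝ := fun k => μ[Y k | ℱ (k - 1)]
  set Z : ℕ → Ω → ℝ := fun k => Y k - R k
  have hY_meas (k : ℕ) (hk : 1 ≤ k) : StronglyMeasurable[ℱ k] (Y k) :=
    (continuous_clip M).comp_stronglyMeasurable (hmeas k hk)
  have hY_int (k : ℕ) (hk : 1 ≤ k) : Integrable (Y k) μ :=
    .of_bound ((hY_meas k hk).mono (ℱ.le k)).aestronglyMeasurable M
      (.of_forall fun ω => abs_clip_le hM _)
  have hZ_bd (k : ℕ) (_ : 1 ≤ k) : ∀ᵐ ω ∂μ, |Z k ω| ≤ 2 * M := by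
    filter_upwards [ae_bdd_abs_condExp_of_ae_bdd_abs (m := ℱ (k - 1))
      (.of_forall fun ω => abs_clip_le hM (X k ω))] with ω hω
    calc |Z k ω| ≤ |Y k ω| + |R k ω| := abs_sub _ _
    _ ≤ 2 * M := by linarith [abs_clip_le hM (X k ω), show |R k ω| ≤ M from hω]
  have hsub : {ω | t + s < ∑ k ∈ Icc 1 K, X k ω} ⊆ (⋃ k ∈ Icc 1 K, {ω | M < |X k ω|}) ∪
      {ω | t ≤ ∑ k ∈ Icc 1 K, Z k ω} ∪ {ω | s ≤ ∑ k ∈ Icc 1 K, |R k ω|} := by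
    intro ω hω
    by_contra h
    simp only [Set.mem_union, Set.mem_iUnion, Set.mem_ofPred_eq, not_or, not_exists,
      not_lt, not_le] at h
    obtain ⟨⟨h_clip, h_Z⟩, h_R⟩ := h
    have hX : ∑ k ∈ Icc 1 K, X k ω = ∑ k ∈ Icc 1 K, Z k ω + ∑ k ∈ Icc 1 K, R k ω := by
      rw [← sum_add_distrib]
      refine sum_congr rfl fun k hk => ?_
      simp [Z, Y, clip_eq_self (h_clip k hk)]
    linarith [hω.out, sum_le_sum fun k (_ : k ∈ Icc 1 K) => le_abs_self (R k ω)]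
  calc _ ≤ μ.real ((⋃ k ∈ Icc 1 K, {ω | M < |X k ω|}) ∪ {ω | t ≤ ∑ k ∈ Icc 1 K, Z k ω} ∪
        {ω | s ≤ ∑ k ∈ Icc 1 K, |R k ω|}) := measureReal_mono hsub
  _ ≤ _ := (measureReal_union_le _ _).trans (add_le_add_left (measureReal_union_le _ _) _)
  _ ≤ _ := by
        gcongr ?_ + ?_ + ?_
        · calc _ ≤ ∑ k ∈ Icc 1 K, μ.real {ω | M < |X k ω|} := measureReal_biUnion_finset_le _ _
          _ ≤ ∑ k ∈ Icc 1 K, a * exp (-M / b) := sum_le_sum fun k hk =>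
                ENNReal.toReal_le_of_le_ofReal (by positivity) (htail k (mem_Icc.1 hk).1 M hM)
          _ = _ := by simp
        · exact measureReal_le_sum_Icc_le
            (fun k hk => (hY_meas k hk).sub (stronglyMeasurable_condExp.mono (ℱ.mono (k.sub_le 1))))
            hZ_bd (fun k hk => condExp_sub_condExp_ae_eq_zero (ℱ.le _) (hY_int k hk)) K ht
        · exact measureReal_le_sum_Icc_abs_le (fun k => integrable_condExp) hs K fun k hk =>
            integral_abs_condExp_clip_le (hint k (mem_Icc.1 hk).1) (hmds k (mem_Icc.1 hk).1)
              ha hb hM (htail k (mem_Icc.1 hk).1)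

lemma ofReal_one_sub_le_measure_forall [IsProbabilityMeasure μ] {P : ℕ → Ω → Prop} {ε : ℝ}
    (hε : 0 ≤ ε)
    (h : ∀ K, 1 ≤ K → μ.real {ω | ¬ P K ω} ≤ ε / (K * √K)) :
    ENNReal.ofReal (1 - 3 * ε) ≤ μ {ω | ∀ K, 1 ≤ K → P K ω} := by
  have hcompl : {ω | ∀ K, 1 ≤ K → P K ω}ᶜ ⊆ ⋃ K, {ω | 1 ≤ K ∧ ¬ P K ω} := by
    intro ω hω
    simpa using hω
  have hK (K : ℕ) : μ {ω | 1 ≤ K ∧ ¬ P K ω} ≤ ENNReal.ofReal (ε / (K * √K)) := by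
    rcases Nat.eq_zero_or_pos K with rfl | hK
    · simp
    · rw [← ofReal_measureReal]
      exact ENNReal.ofReal_le_ofReal ((measureReal_mono fun ω hω => hω.2).trans (h K hK))
  have hbad : μ {ω | ∀ K, 1 ≤ K → P K ω}ᶜ ≤ ENNReal.ofReal (3 * ε) := by
    refine (measure_mono hcompl).trans ((measure_iUnion_le _).trans ?_)
    refine ENNReal.tsum_le_of_sum_range_le fun n => ?_
    calc ∑ K ∈ range n, μ {ω | 1 ≤ K ∧ ¬ P K ω}
        ≤ ∑ K ∈ range n, ENNReal.ofReal (ε / (K * √K)) := sum_le_sum fun K _ => hK K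
    _ = ENNReal.ofReal (ε * ∑ K ∈ range n, 1 / ((K : ℝ) * √K)) := by
          rw [← ENNReal.ofReal_sum_of_nonneg fun K _ => by positivity, mul_sum]
          simp only [mul_one_div]
    _ ≤ ENNReal.ofReal (3 * ε) := ENNReal.ofReal_le_ofReal (by
          linarith [mul_le_mul_of_nonneg_left (sum_range_one_div_mul_sqrt_le n) hε])
  rw [ENNReal.ofReal_sub _ (by positivity), ENNReal.ofReal_one, tsub_le_iff_right,
    ← measure_univ (μ := μ)]
  exact (measure_univ_le_add_compl _).trans (add_le_add le_rfl hbad)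

end Probability

lemma one_le_log_four_mul_div {K : ℕ} (hK : 1 ≤ K) {δ : ℝ} (hδ0 : 0 < δ) (hδ1 : δ ≤ 1) :
    1 ≤ log (4 * K / δ) := by
  have hKR : (1 : ℝ) ≤ K := by exact_mod_cast hK
  rw [le_log_iff_exp_le (by positivity)]
  calc exp 1 ≤ 4 := by linarith [exp_one_lt_d9]
  _ ≤ 4 * K / δ := by rw [le_div_iff₀ hδ0]; nlinarith

lemma mul_div_four_mul_pow_three_le {K δ : ℝ} (hK : 1 ≤ K) (hδ0 : 0 < δ) (hδ1 : δ ≤ 1) :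
    K * (δ / (4 * K)) ^ 3 ≤ δ / (64 * (K * √K)) := by
  have hsqrtK : √K ≤ K := (sqrt_le_left (by positivity)).2 (by nlinarith)
  have h : K * (δ / (4 * K)) ^ 3 = δ ^ 3 / (64 * K ^ 2) := by field_simp; ring
  rw [h, div_le_div_iff₀ (by positivity) (by positivity)]
  have hδ3 : δ ^ 3 ≤ δ := by nlinarith [pow_le_one₀ hδ0.le hδ1 (n := 2)]
  have hK3 : K * √K ≤ K ^ 2 := by nlinarith
  nlinarith [mul_le_mul hδ3 hK3 (by positivity) hδ0.le]

lemma div_four_mul_mul_sqrt_le {K δ : ℝ} (hK : 0 < K) (hδ0 : 0 < δ) (hδ1 : δ ≤ 1) :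
    δ / (4 * K) * √(δ / (4 * K)) ≤ δ / (8 * (K * √K)) := by
  have hsqrt : √(δ / (4 * K)) ≤ 1 / (2 * √K) := by
    rw [sqrt_le_left (by positivity), div_pow, mul_pow, sq_sqrt hK.le,
      div_le_div_iff₀ (by positivity) (by positivity)]
    nlinarith
  calc δ / (4 * K) * √(δ / (4 * K)) ≤ δ / (4 * K) * (1 / (2 * √K)) := by gcongr
  _ = δ / (8 * (K * √K)) := by field_simp; ring

/-- The bound of `measureReal_lt_sum_Icc_le` at `M = 12 τ L`, `t = 42 τ √(K L³)` and
`s = 2 τ √(K L³)`. -/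
lemma azuma_terms_le {K : ℕ} (hK : 1 ≤ K) {δ τ L : ℝ} (hδ0 : 0 < δ) (hδ1 : δ ≤ 1) (hτ : 0 < τ)
    (hL : exp (-L) = δ / (4 * K)) (hL1 : 1 ≤ L) :
    K * (2 * exp (-(12 * τ * L) / (4 * τ))) +
        exp (-(42 * τ * √(K * L ^ 3)) ^ 2 / (2 * K * (2 * (12 * τ * L)) ^ 2)) +
        K * (2 * (4 * τ) * exp (-(12 * τ * L) / (4 * τ))) / (2 * τ * √(K * L ^ 3)) ≤
      δ / 3 / (K * √K) := by
  set q := δ / (4 * K)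
  set u := √(K * L ^ 3)
  have hKR : (1 : ℝ) ≤ K := by exact_mod_cast hK
  have hu : 1 ≤ u := one_le_sqrt.2 (one_le_mul_of_one_le_of_one_le hKR (one_le_pow₀ hL1))
  have hu2 : u ^ 2 = K * L ^ 3 := sq_sqrt (by positivity)
  have hM : exp (-(12 * τ * L) / (4 * τ)) = q ^ 3 := by
    rw [show -(12 * τ * L) / (4 * τ) = (3 : ℕ) * -L by field_simp; push_cast; ring,
      exp_nat_mul, hL]
  have hAzuma : exp (-(42 * τ * u) ^ 2 / (2 * K * (2 * (12 * τ * L)) ^ 2)) ≤ q * √q := by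
    have hexp : -(42 * τ * u) ^ 2 / (2 * K * (2 * (12 * τ * L)) ^ 2) = -(49 / 32 * L) := by
      rw [mul_pow, hu2]
      field_simp
      ring
    calc _ ≤ exp (-L + -L / 2) := by rw [hexp, exp_le_exp]; linarith
    _ = q * √q := by rw [exp_add, exp_half, ← hL]
  have hdrift : K * (2 * (4 * τ) * q ^ 3) / (2 * τ * u) ≤ 4 * (K * q ^ 3) := by
    rw [show K * (2 * (4 * τ) * q ^ 3) / (2 * τ * u) = 4 * (K * q ^ 3) / u by field_simp]
    exact div_le_self (by positivity) hu
  have hKq : K * q ^ 3 ≤ δ / (64 * (K * √K)) := mul_div_four_mul_pow_three_le hKR hδ0 hδ1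
  have hqq : q * √q ≤ δ / (8 * (K * √K)) := div_four_mul_mul_sqrt_le (by positivity) hδ0 hδ1
  rw [hM]
  calc _ ≤ 2 * (δ / (64 * (K * √K))) + δ / (8 * (K * √K)) + 4 * (δ / (64 * (K * √K))) := by
        linarith
  _ ≤ δ / 3 / (K * √K) := by
        rw [div_div, ← sub_nonneg]
        field_simp
        ring_nf
        positivity

/-- Anytime one-sided Azuma-type bound for martingale difference sequences with
exponential tails of the form `2 exp(-m/(4τ))`. -/
theorem anytime_azuma_tau
    {Ω : Type*} {m0 : MeasurableSpace Ω} {μ : Measure Ω} [IsProbabilityMeasure μ]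
    (ℱ : Filtration ℕ m0) (X : ℕ → Ω → ℝ)
    (hmeas : ∀ k, 1 ≤ k → StronglyMeasurable[ℱ k] (X k))
    (hint : ∀ k, 1 ≤ k → Integrable (X k) μ)
    (hmds : ∀ k, 1 ≤ k → μ[X k | ℱ (k - 1)] =ᵐ[μ] 0)
    (τ : ℝ) (hτ : 0 < τ)
    (htail : ∀ k, 1 ≤ k → ∀ m : ℝ, 0 ≤ m →
      μ {ω | m < |X k ω|} ≤ ENNReal.ofReal (2 * Real.exp (-m / (4 * τ))))
    (δ : ℝ) (hδ0 : 0 < δ) (hδ1 : δ < 1) :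
    ENNReal.ofReal (1 - δ) ≤
      μ {ω | ∀ K : ℕ, 1 ≤ K →
        ∑ k ∈ Finset.Icc 1 K, X k ω ≤
          44 * τ * Real.sqrt (K * (Real.log (4 * K / δ)) ^ 3)} := by
  have hfixed (K : ℕ) (hK : 1 ≤ K) : μ.real {ω | ¬ ∑ k ∈ Icc 1 K, X k ω ≤
      44 * τ * √(K * log (4 * K / δ) ^ 3)} ≤ δ / 3 / (K * √K) := by
    set L := log (4 * K / δ)
    have hL1 : 1 ≤ L := one_le_log_four_mul_div hK hδ0 hδ1.le
    have hL : exp (-L) = δ / (4 * K) := by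
      rw [exp_neg, exp_log (by positivity), inv_div]
    have hu : 0 < √(K * L ^ 3) := sqrt_pos.2 (by positivity)
    simp only [not_le, show 44 * τ * √(K * L ^ 3) = 42 * τ * √(K * L ^ 3) + 2 * τ * √(K * L ^ 3)
      by ring]
    exact (measureReal_lt_sum_Icc_le hmeas hint hmds zero_le_two (by positivity) htail K
      (M := 12 * τ * L) (by positivity) (by positivity) (by positivity)).trans
      (azuma_terms_le hK hδ0 hδ1.le hτ hL hL1)
  calc ENNReal.ofReal (1 - δ) = ENNReal.ofReal (1 - 3 * (δ / 3)) := by ring_nf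
  _ ≤ _ := ofReal_one_sub_le_measure_forall (by positivity) hfixed
end

section
/- First-order optimality bound for the entropy minimizer: Let ι be a finite index set, C a convex subset of the functions ι → ℝ, and R(q) = ∑_{i∈ι} ( q(i)·log(q(i)) − q(i) ) the unnormalized negative entropy (with convention 0·log 0 = 0). Suppose q₁ ∈ C satisfies q₁(i) > 0 for all i and R(q₁) ≤ R(q) for all q ∈ C. Then for every nonnegative q* ∈ C: KL(q*‖q₁) ≤ R(q*) − R(q₁), where KL(q‖p) = ∑_{i∈ι} ( q(i)·log(q(i)/p(i)) + p(i) − q(i) ). -/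
open Finset Real

/-!
`KL(q*‖q₁) = R(q*) - R(q₁) - ⟪∇R(q₁), q* - q₁⟫` is the Bregman divergence of `R`, with
`∇R(q₁) = log q₁` since `q₁ > 0`. The inner product is nonnegative by the first-order
optimality condition for the minimizer `q₁` of `R` over the convex set `C`.
-/

lemma mul_log_div_add_sub_eq {x y : ℝ} (hy : y ≠ 0) :
    x * log (x / y) + y - x = (x * log x - x) - (y * log y - y) - log y * (x - y) := by
  rcases eq_or_ne x 0 with rfl | hx
  · ring
  · rw [log_div hx hy]
    ring

lemma hasDerivAt_mul_log_sub {x : ℝ} (hx : x ≠ 0) :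
    HasDerivAt (fun x => x * log x - x) (log x) x := by
  simpa using (hasDerivAt_mul_log hx).fun_sub (hasDerivAt_id x)

lemma hasFDerivAt_sum_mul_log_sub {ι : Type*} [Fintype ι] {q : ι → ℝ} (hq : ∀ i, q i ≠ 0) :
    HasFDerivAt (fun p : ι → ℝ => ∑ i, (p i * log (p i) - p i))
      (∑ i, log (q i) • ContinuousLinearMap.proj (R := ℝ) (φ := fun _ : ι => ℝ) i) q :=
  HasFDerivAt.fun_sum fun i _ =>
    (hasDerivAt_mul_log_sub (hq i)).comp_hasFDerivAt (f := fun p : ι → ℝ => p i) q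
      (hasFDerivAt_apply i q)

theorem IsMinOn.hasFDerivWithinAt_sub_nonneg {E : Type*} [NormedAddCommGroup E]
    [NormedSpace ℝ E] {f : E → ℝ} {f' : E →L[ℝ] ℝ} {s : Set E} {x y : E} (hs : Convex ℝ s)
    (hmin : IsMinOn f s x) (hf : HasFDerivWithinAt f f' s x) (hx : x ∈ s) (hy : y ∈ s) :
    0 ≤ f' (y - x) :=
  hmin.localize.hasFDerivWithinAt_nonneg hf <|
    sub_mem_posTangentConeAt_of_segment_subset (hs.segment_subset hx hy)

theorem kl_le_entropy_diff_general
    {ι : Type*} [Fintype ι] (C : Set (ι → ℝ)) (hC : Convex ℝ C)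
    (q₁ : ι → ℝ) (hq₁C : q₁ ∈ C) (hq₁pos : ∀ i, 0 < q₁ i)
    (hmin : ∀ q ∈ C,
      ∑ i, (q₁ i * Real.log (q₁ i) - q₁ i) ≤ ∑ i, (q i * Real.log (q i) - q i))
    (qs : ι → ℝ) (hqsC : qs ∈ C) :
    ∑ i, (qs i * Real.log (qs i / q₁ i) + q₁ i - qs i) ≤
      (∑ i, (qs i * Real.log (qs i) - qs i)) -
        ∑ i, (q₁ i * Real.log (q₁ i) - q₁ i) := by
  have hq₁ne : ∀ i, q₁ i ≠ 0 := fun i => (hq₁pos i).ne'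
  have hopt : 0 ≤ ∑ i, log (q₁ i) * (qs i - q₁ i) := by
    simpa using IsMinOn.hasFDerivWithinAt_sub_nonneg hC (isMinOn_iff.2 hmin)
      (hasFDerivAt_sum_mul_log_sub hq₁ne).hasFDerivWithinAt hq₁C hqsC
  simp_rw [mul_log_div_add_sub_eq (hq₁ne _), sum_sub_distrib]
  linarith

/-- First-order optimality bound for the entropy minimizer: if `q₁` is a strictly
positive minimizer of the unnormalized negative entropy `R` over a convex set `C`,
then for every nonnegative `q* ∈ C`, `KL(q*‖q₁) ≤ R(q*) - R(q₁)`. -/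
theorem kl_le_entropy_diff
    {ι : Type*} [Fintype ι] (C : Set (ι → ℝ)) (hC : Convex ℝ C)
    (q₁ : ι → ℝ) (hq₁C : q₁ ∈ C) (hq₁pos : ∀ i, 0 < q₁ i)
    (hmin : ∀ q ∈ C,
      ∑ i, (q₁ i * Real.log (q₁ i) - q₁ i) ≤ ∑ i, (q i * Real.log (q i) - q i))
    (qs : ι → ℝ) (hqsC : qs ∈ C) (hqs : ∀ i, 0 ≤ qs i) :
    ∑ i, (qs i * Real.log (qs i / q₁ i) + q₁ i - qs i) ≤
      (∑ i, (qs i * Real.log (qs i) - qs i)) -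
        ∑ i, (q₁ i * Real.log (q₁ i) - q₁ i) :=
  kl_le_entropy_diff_general C hC q₁ hq₁C hq₁pos hmin qs hqsC
end

section
/- Online mirror descent regret bound over a bounded-mass convex decision set: Let ι be a finite index set of cardinality N ≥ 2, let τ ≥ 1, and let C be a nonempty convex compact subset of functions q : ι → ℝ such that every q ∈ C satisfies q(i) > 0 for all i and ∑_{i∈ι} q(i) ≤ τ. Let K ≥ 1, let c_1, …, c_K : ι → [0,1] be arbitrary cost vectors, and set η = √( 3·log(τN) / K ). Let q₁ ∈ C be a minimizer over C of R(q) = ∑_i ( q(i)·log q(i) − q(i) ), and for 1 ≤ k ≤ K−1 let q_{k+1} ∈ C be a minimizer over C of q ↦ η·∑_i q(i)·c_k(i) + KL(q‖q_k), where KL(q‖p) = ∑_i ( q(i)·log(q(i)/p(i)) + p(i) − q(i) ). Then for every q* ∈ C: ∑_{k=1}^K ∑_{i∈ι} ( q_k(i) − q*(i) )·c_k(i) ≤ 2·τ·√( 3·K·log(τN) ). -/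
open Finset Real

/-!
Entropic mirror descent. The minimizer `q_{k+1}` of `η⟪c_k, ·⟫ + KL(·‖q_k)` over the convex set
`C` satisfies the first-order condition `⟪η c_k + log (q_{k+1} / q_k), q* - q_{k+1}⟫ ≥ 0`, and the
three-point identity for the Bregman divergence `KL` of `R` turns it into
`η⟪c_k, q_k - q*⟫ ≤ KL(q*‖q_k) - KL(q*‖q_{k+1}) + (η⟪c_k, q_k - q_{k+1}⟫ - KL(q_{k+1}‖q_k))`.
The bracket is at most `η²τ/2`, coordinatewise from `e^{-x} ≤ 1 - x + x²/2`. Summing telescopes;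
the first divergence is `KL(q*‖q₁) ≤ R(q*) - R(q₁) ≤ τ log (τN) + 1`, the last round, which has no
successor iterate, costs at most `ητ`, and `η = √(3 log (τN) / K)` balances the terms.
-/

theorem Real.exp_neg_le_one_sub_add_sq_div_two {x : ℝ} (hx : 0 ≤ x) :
    exp (-x) ≤ 1 - x + x ^ 2 / 2 := by
  have hquad : 0 < 1 - x + x ^ 2 / 2 := by nlinarith [sq_nonneg (x - 1)]
  rw [exp_neg, inv_le_iff_one_le_mul₀' (exp_pos x)]
  -- `(1 + x + x²/2)(1 - x + x²/2) = 1 + x⁴/4`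
  nlinarith [mul_le_mul_of_nonneg_right (quadratic_le_exp_of_nonneg hx) hquad.le, pow_nonneg hx 4]

theorem Real.sub_le_mul_log_div {p r : ℝ} (hp : 0 < p) (hr : 0 < r) :
    p - r ≤ p * log (p / r) := by
  have h := mul_le_mul_of_nonneg_left (self_sub_one_le_mul_log (div_pos hp hr).le) hr.le
  have e₁ : r * (p / r - 1) = p - r := by field_simp
  have e₂ : r * (p / r * log (p / r)) = p * log (p / r) := by field_simp
  linarith

theorem Real.mul_sub_le_mul_log_div_add {a b γ : ℝ} (ha : 0 < a) (hb : 0 < b) (hγ : 0 ≤ γ) :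
    γ * (a - b) ≤ b * log (b / a) + a - b + a * γ ^ 2 / 2 := by
  -- compare `b` with the exponentially tilted point `a e^{-γ}`
  have hgibbs := sub_le_mul_log_div hb (mul_pos ha (exp_pos (-γ)))
  rw [div_mul_eq_div_div, log_div (div_pos hb ha).ne' (exp_pos _).ne', log_exp] at hgibbs
  nlinarith [mul_le_mul_of_nonneg_left (exp_neg_le_one_sub_add_sq_div_two hγ) ha.le]

theorem Real.half_le_log_of_two_le {x : ℝ} (hx : 2 ≤ x) : 1 / 2 ≤ log x := by
  linarith [log_le_log two_pos hx, log_two_gt_d9]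

theorem hasDerivAt_mul_log_div_add_sub {r x : ℝ} (hr : 0 < r) (hx : 0 < x) :
    HasDerivAt (fun u => u * log (u / r) + r - u) (log (x / r)) x := by
  have h := (((hasDerivAt_id' x).fun_mul (((hasDerivAt_id' x).div_const r).log
    (div_pos hx hr).ne')).add_const r).fun_sub (hasDerivAt_id' x)
  refine h.congr_deriv ?_
  field_simp
  ring

theorem hasFDerivAt_sum_comp_apply {ι : Type*} [Fintype ι] {g : ι → ℝ → ℝ} {g' x : ι → ℝ}
    (hg : ∀ i, HasDerivAt (g i) (g' i) (x i)) :
    HasFDerivAt (fun p : ι → ℝ => ∑ i, g i (p i))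
      (∑ i, g' i • ContinuousLinearMap.proj (R := ℝ) (φ := fun _ : ι => ℝ) i) x :=
  HasFDerivAt.fun_sum fun i _ => (hg i).comp_hasFDerivAt x (hasFDerivAt_apply i x)

theorem sum_mul_sub_nonneg_of_isMinOn {ι : Type*} [Fintype ι] {C : Set (ι → ℝ)}
    (hC : Convex ℝ C) {g : ι → ℝ → ℝ} {g' x y : ι → ℝ}
    (hg : ∀ i, HasDerivAt (g i) (g' i) (x i)) (hmin : IsMinOn (fun p => ∑ i, g i (p i)) C x)
    (hx : x ∈ C) (hy : y ∈ C) :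
    0 ≤ ∑ i, g' i * (y i - x i) := by
  have := hmin.localize.hasFDerivWithinAt_nonneg (hasFDerivAt_sum_comp_apply hg).hasFDerivWithinAt
    (sub_mem_posTangentConeAt_of_segment_subset (hC.segment_subset hx hy))
  simpa using this

theorem sum_Icc_le_of_le_sub_add {a D : ℕ → ℝ} {B : ℝ} {n : ℕ}
    (h : ∀ k ∈ Icc 1 n, a k ≤ D k - D (k + 1) + B) :
    ∑ k ∈ Icc 1 n, a k ≤ D 1 - D (n + 1) + n * B := by
  induction n with
  | zero => simp
  | succ n ih =>
    rw [sum_Icc_succ_top (by omega), Nat.cast_succ]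
    have hlast := h (n + 1) (by simp)
    have hprev := ih fun k hk => h k (by simp only [mem_Icc] at hk ⊢; omega)
    linarith

theorem sum_sub_mul_le_sum {ι : Type*} [Fintype ι] {x y c : ι → ℝ} (hx : ∀ i, 0 ≤ x i)
    (hy : ∀ i, 0 ≤ y i) (hc : ∀ i, c i ∈ Set.Icc (0 : ℝ) 1) :
    ∑ i, (x i - y i) * c i ≤ ∑ i, x i :=
  sum_le_sum fun i _ => by nlinarith [hx i, hy i, (hc i).1, (hc i).2]

namespace MirrorDescent

variable {ι : Type*} [Fintype ι]

noncomputable def negEntropy (p : ι → ℝ) : ℝ := ∑ i, (p i * log (p i) - p i)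

noncomputable def kl (p r : ι → ℝ) : ℝ := ∑ i, (p i * log (p i / r i) + r i - p i)

theorem kl_nonneg {p r : ι → ℝ} (hp : ∀ i, 0 < p i) (hr : ∀ i, 0 < r i) : 0 ≤ kl p r :=
  sum_nonneg fun i _ => by linarith [sub_le_mul_log_div (hp i) (hr i)]

theorem kl_eq_negEntropy_sub {p r : ι → ℝ} (hp : ∀ i, 0 < p i) (hr : ∀ i, 0 < r i) :
    kl p r = negEntropy p - negEntropy r - ∑ i, log (r i) * (p i - r i) := by
  simp only [kl, negEntropy, ← sum_sub_distrib]
  refine sum_congr rfl fun i _ => ?_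
  rw [log_div (hp i).ne' (hr i).ne']
  ring

theorem sum_log_div_mul_sub_eq {r x y : ι → ℝ} (hr : ∀ i, 0 < r i) (hx : ∀ i, 0 < x i)
    (hy : ∀ i, 0 < y i) :
    ∑ i, log (x i / r i) * (y i - x i) = kl y r - kl y x - kl x r := by
  simp only [kl, ← sum_sub_distrib]
  refine sum_congr rfl fun i _ => ?_
  rw [log_div (hy i).ne' (hr i).ne',
    log_div (hy i).ne' (hx i).ne', log_div (hx i).ne' (hr i).ne']
  ring

theorem mul_sum_sub_mul_le_kl_add {η : ℝ} (hη : 0 ≤ η) {c r x : ι → ℝ}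
    (hc : ∀ i, c i ∈ Set.Icc (0 : ℝ) 1) (hr : ∀ i, 0 < r i) (hx : ∀ i, 0 < x i) :
    η * ∑ i, (r i - x i) * c i ≤ kl x r + η ^ 2 * (∑ i, r i) / 2 := by
  simp only [kl, mul_sum, sum_div, ← sum_add_distrib]
  refine sum_le_sum fun i _ => ?_
  have h := mul_sub_le_mul_log_div_add (hr i) (hx i) (mul_nonneg hη (hc i).1)
  have hsq : (η * c i) ^ 2 ≤ η ^ 2 := by
    rw [mul_pow]
    exact mul_le_of_le_one_right (sq_nonneg η) (pow_le_one₀ (hc i).1 (hc i).2)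
  nlinarith [mul_le_mul_of_nonneg_left hsq (hr i).le]

theorem mul_sum_sub_mul_le_kl_sub_kl_of_isMinOn {C : Set (ι → ℝ)} (hC : Convex ℝ C)
    (hCpos : ∀ p ∈ C, ∀ i, 0 < p i) {η : ℝ} (hη : 0 ≤ η) {c r x y : ι → ℝ}
    (hc : ∀ i, c i ∈ Set.Icc (0 : ℝ) 1) (hr : ∀ i, 0 < r i)
    (hmin : IsMinOn (fun p => η * ∑ i, p i * c i + kl p r) C x) (hx : x ∈ C) (hy : y ∈ C) :
    η * ∑ i, (r i - y i) * c i ≤ kl y r - kl y x + η ^ 2 * (∑ i, r i) / 2 := by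
  have hopt : 0 ≤ ∑ i, (η * c i + log (x i / r i)) * (y i - x i) := by
    refine sum_mul_sub_nonneg_of_isMinOn hC
      (g := fun i u => η * (u * c i) + (u * log (u / r i) + r i - u)) (fun i => ?_) ?_ hx hy
    · exact (((hasDerivAt_id _).mul_const _).const_mul η).add
        (hasDerivAt_mul_log_div_add_sub (hr i) (hCpos x hx i)) |>.congr_deriv (by simp)
    · convert hmin using 2 with p
      simp only [kl, mul_sum, sum_add_distrib]
  have hsplit : ∑ i, (η * c i + log (x i / r i)) * (y i - x i) =
      η * ∑ i, (r i - x i) * c i - η * ∑ i, (r i - y i) * c i +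
        ∑ i, log (x i / r i) * (y i - x i) := by
    simp only [mul_sum, ← sum_sub_distrib, ← sum_add_distrib]
    exact sum_congr rfl fun i _ => by ring
  have hlocal := mul_sum_sub_mul_le_kl_add hη hc hr (hCpos x hx)
  have hthree := sum_log_div_mul_sub_eq hr (hCpos x hx) (hCpos y hy)
  linarith

theorem kl_le_negEntropy_sub_of_isMinOn {C : Set (ι → ℝ)} (hC : Convex ℝ C) {x y : ι → ℝ}
    (hmin : IsMinOn negEntropy C x) (hx : x ∈ C) (hy : y ∈ C) (hxpos : ∀ i, 0 < x i)
    (hypos : ∀ i, 0 < y i) :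
    kl y x ≤ negEntropy y - negEntropy x := by
  have hopt : 0 ≤ ∑ i, log (x i) * (y i - x i) :=
    sum_mul_sub_nonneg_of_isMinOn hC (g := fun _ u => u * log u - u)
      (fun i => ((hasDerivAt_mul_log (hxpos i).ne').sub (hasDerivAt_id _)).congr_deriv (by simp))
      hmin hx hy
  rw [kl_eq_negEntropy_sub hypos hxpos]
  linarith

theorem negEntropy_le_mul_log {τ : ℝ} (hτ : 1 ≤ τ) {p : ι → ℝ} (hp : ∀ i, 0 < p i)
    (hsum : ∑ i, p i ≤ τ) :
    negEntropy p ≤ τ * log τ :=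
  calc negEntropy p ≤ ∑ i, p i * log τ := sum_le_sum fun i _ => by
        have := log_le_log (hp i) ((single_le_sum (fun j _ => (hp j).le) (mem_univ i)).trans hsum)
        nlinarith [hp i]
    _ = (∑ i, p i) * log τ := (sum_mul ..).symm
    _ ≤ τ * log τ := mul_le_mul_of_nonneg_right hsum (log_nonneg hτ)

theorem neg_mul_log_card_sub_one_le_negEntropy [Nonempty ι] {τ : ℝ} {p : ι → ℝ}
    (hp : ∀ i, 0 < p i) (hsum : ∑ i, p i ≤ τ) :
    -(τ * log (Fintype.card ι)) - 1 ≤ negEntropy p := by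
  have hN : (0 : ℝ) < Fintype.card ι := by exact_mod_cast Fintype.card_pos
  -- compare with the uniform vector of total mass `1`
  calc -(τ * log (Fintype.card ι)) - 1 ≤ -((∑ i, p i) * log (Fintype.card ι)) - 1 := by
        nlinarith [log_natCast_nonneg (Fintype.card ι)]
    _ = ∑ i, (p i * log (1 / Fintype.card ι) - 1 / Fintype.card ι) := by
        rw [sum_sub_distrib, ← sum_mul, sum_const, card_univ, nsmul_eq_mul, one_div, log_inv]
        field_simp
    _ ≤ negEntropy p := sum_le_sum fun i _ => by
        have := sub_le_mul_log_div (hp i) (one_div_pos.mpr hN)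
        rw [log_div (hp i).ne' (one_div_pos.mpr hN).ne'] at this
        linarith

theorem kl_le_mul_log_add_one_of_isMinOn [Nonempty ι] {C : Set (ι → ℝ)} (hC : Convex ℝ C)
    (hCpos : ∀ p ∈ C, ∀ i, 0 < p i) {τ : ℝ} (hτ : 1 ≤ τ) (hCsum : ∀ p ∈ C, ∑ i, p i ≤ τ)
    {x y : ι → ℝ} (hmin : IsMinOn negEntropy C x) (hx : x ∈ C) (hy : y ∈ C) :
    kl y x ≤ τ * log (τ * Fintype.card ι) + 1 := by
  have hkl := kl_le_negEntropy_sub_of_isMinOn hC hmin hx hy (hCpos x hx) (hCpos y hy)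
  have hy_le := negEntropy_le_mul_log hτ (hCpos y hy) (hCsum y hy)
  have hx_ge := neg_mul_log_card_sub_one_le_negEntropy (hCpos x hx) (hCsum x hx)
  rw [log_mul (by positivity) (by positivity)]
  linarith

end MirrorDescent

theorem le_two_mul_sqrt_of_mul_le {R τ L K η : ℝ} (hτ : 1 ≤ τ) (hL : 1 / 2 ≤ L) (hK : 1 ≤ K)
    (hη : η = √(3 * L / K)) (h : η * R ≤ τ * L + 1 + (K - 1) * (η ^ 2 * τ / 2) + η * τ) :
    R ≤ 2 * τ * √(3 * K * L) := by
  have hη0 : 0 < η := hη ▸ sqrt_pos.2 (by positivity)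
  have hη2 : η ^ 2 = 3 * L / K := hη ▸ sq_sqrt (by positivity)
  have hηs : η * √(3 * K * L) = 3 * L := by
    rw [hη, ← sqrt_mul (by positivity), show 3 * L / K * (3 * K * L) = (3 * L) ^ 2 by
      field_simp]
    exact sqrt_sq (by positivity)
  have hηle : η ≤ 3 * L * (K + 1) / (2 * K) := by
    rw [hη, sqrt_le_left (by positivity), div_pow, le_div_iff₀ (by positivity)]
    field_simp
    nlinarith [sq_nonneg (K - 1), mul_le_mul_of_nonneg_left hL (sq_nonneg (K + 1))]
  have hKL : (K - 1) * (η ^ 2 * τ / 2) + η * τ ≤ 3 * L * τ := by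
    rw [hη2]
    have := mul_le_mul_of_nonneg_right hηle (by positivity : (0 : ℝ) ≤ τ)
    have e : (K - 1) * (3 * L / K * τ / 2) + 3 * L * (K + 1) / (2 * K) * τ = 3 * L * τ := by
      field_simp; ring
    linarith
  refine le_of_mul_le_mul_left ?_ hη0
  calc η * R ≤ 6 * τ * L := by nlinarith
    _ = η * (2 * τ * √(3 * K * L)) := by linear_combination (-2 * τ) * hηs

open MirrorDescent

theorem omd_regret_bound_general
    {ι : Type*} [Fintype ι] (hcard : 2 ≤ Fintype.card ι)
    (τ : ℝ) (hτ : 1 ≤ τ)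
    (C : Set (ι → ℝ)) (hCconv : Convex ℝ C)
    (hCpos : ∀ q ∈ C, ∀ i, 0 < q i) (hCsum : ∀ q ∈ C, ∑ i, q i ≤ τ)
    (K : ℕ) (hK : 1 ≤ K)
    (c : ℕ → ι → ℝ) (hc : ∀ k i, c k i ∈ Set.Icc (0 : ℝ) 1)
    (η : ℝ) (hη : η = Real.sqrt (3 * Real.log (τ * Fintype.card ι) / K))
    (q : ℕ → ι → ℝ)
    (hq1C : q 1 ∈ C)
    (hq1min : ∀ p ∈ C,
      ∑ i, (q 1 i * Real.log (q 1 i) - q 1 i) ≤ ∑ i, (p i * Real.log (p i) - p i))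
    (hqkC : ∀ k, 1 ≤ k → k ≤ K - 1 → q (k + 1) ∈ C)
    (hqkmin : ∀ k, 1 ≤ k → k ≤ K - 1 → ∀ p ∈ C,
      η * (∑ i, q (k + 1) i * c k i) +
          ∑ i, (q (k + 1) i * Real.log (q (k + 1) i / q k i) + q k i - q (k + 1) i)
        ≤ η * (∑ i, p i * c k i) +
          ∑ i, (p i * Real.log (p i / q k i) + q k i - p i))
    (qs : ι → ℝ) (hqs : qs ∈ C) :
    ∑ k ∈ Finset.Icc 1 K, ∑ i, (q k i - qs i) * c k i ≤
      2 * τ * Real.sqrt (3 * K * Real.log (τ * Fintype.card ι)) := by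
  obtain ⟨n, rfl⟩ := Nat.exists_eq_add_of_le' hK
  have : Nonempty ι := Fintype.card_pos_iff.mp (by omega)
  have hqC : ∀ k ∈ Icc 1 (n + 1), q k ∈ C := by
    rintro (_ | _ | k) hk <;> simp only [mem_Icc] at hk
    · omega
    · exact hq1C
    · exact hqkC (k + 1) (by omega) (by omega)
  have hη0 : 0 ≤ η := hη ▸ sqrt_nonneg _
  have hstep : ∀ k ∈ Icc 1 n, η * ∑ i, (q k i - qs i) * c k i ≤
      kl qs (q k) - kl qs (q (k + 1)) + η ^ 2 * τ / 2 := by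
    intro k hk
    obtain ⟨hk1, hkn⟩ := mem_Icc.mp hk
    have hqk := hqC k (mem_Icc.mpr ⟨hk1, by omega⟩)
    refine (mul_sum_sub_mul_le_kl_sub_kl_of_isMinOn hCconv hCpos hη0 (hc k) (hCpos _ hqk)
      (isMinOn_iff.mpr (hqkmin k hk1 (by omega))) (hqkC k hk1 (by omega)) hqs).trans ?_
    gcongr
    exact hCsum _ hqk
  have hfirst := kl_le_mul_log_add_one_of_isMinOn hCconv hCpos hτ hCsum
    (isMinOn_iff.mpr hq1min) hq1C hqs
  have hqn := hqC (n + 1) (by simp)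
  have hlast : η * ∑ i, (q (n + 1) i - qs i) * c (n + 1) i ≤ η * τ :=
    mul_le_mul_of_nonneg_left ((sum_sub_mul_le_sum (fun i => (hCpos _ hqn i).le)
      (fun i => (hCpos _ hqs i).le) (hc (n + 1))).trans (hCsum _ hqn)) hη0
  have hN : (2 : ℝ) ≤ Fintype.card ι := by exact_mod_cast hcard
  have hL := half_le_log_of_two_le (by nlinarith : (2 : ℝ) ≤ τ * Fintype.card ι)
  refine le_two_mul_sqrt_of_mul_le hτ hL (by simp) (by exact_mod_cast hη) ?_
  rw [mul_sum, sum_Icc_succ_top (by omega)]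
  have htelescope := sum_Icc_le_of_le_sub_add hstep
  have hkl_nonneg := kl_nonneg (hCpos _ hqs) (hCpos _ hqn)
  push_cast
  linarith

/-- Online mirror descent regret bound over a convex compact decision set of
positive vectors with total mass at most `τ`. -/
theorem omd_regret_bound
    {ι : Type*} [Fintype ι] (hcard : 2 ≤ Fintype.card ι)
    (τ : ℝ) (hτ : 1 ≤ τ)
    (C : Set (ι → ℝ)) (hCne : C.Nonempty) (hCconv : Convex ℝ C) (hCcomp : IsCompact C)
    (hCpos : ∀ q ∈ C, ∀ i, 0 < q i) (hCsum : ∀ q ∈ C, ∑ i, q i ≤ τ)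
    (K : ℕ) (hK : 1 ≤ K)
    (c : ℕ → ι → ℝ) (hc : ∀ k i, c k i ∈ Set.Icc (0 : ℝ) 1)
    (η : ℝ) (hη : η = Real.sqrt (3 * Real.log (τ * Fintype.card ι) / K))
    (q : ℕ → ι → ℝ)
    (hq1C : q 1 ∈ C)
    (hq1min : ∀ p ∈ C,
      ∑ i, (q 1 i * Real.log (q 1 i) - q 1 i) ≤ ∑ i, (p i * Real.log (p i) - p i))
    (hqkC : ∀ k, 1 ≤ k → k ≤ K - 1 → q (k + 1) ∈ C)
    (hqkmin : ∀ k, 1 ≤ k → k ≤ K - 1 → ∀ p ∈ C,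
      η * (∑ i, q (k + 1) i * c k i) +
          ∑ i, (q (k + 1) i * Real.log (q (k + 1) i / q k i) + q k i - q (k + 1) i)
        ≤ η * (∑ i, p i * c k i) +
          ∑ i, (p i * Real.log (p i / q k i) + q k i - p i))
    (qs : ι → ℝ) (hqs : qs ∈ C) :
    ∑ k ∈ Finset.Icc 1 K, ∑ i, (q k i - qs i) * c k i ≤
      2 * τ * Real.sqrt (3 * K * Real.log (τ * Fintype.card ι)) :=
  omd_regret_bound_general hcard τ hτ C hCconv hCpos hCsum K hK c hc η hη q hq1C hq1min hqkC hqkmin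
    qs hqs
end

section
/- Multiplicative anytime bound for adapted bounded nonnegative sequences: Let (X_n)_{n≥1} be a sequence of random variables adapted to a filtration (F_n)_{n≥0} on a probability space, with 0 ≤ X_n ≤ B almost surely for a constant B > 0. Then for every δ ∈ (0,1), with probability at least 1 − δ, simultaneously for all integers n ≥ 1: ∑_{i=1}^n E[ X_i | F_{i−1} ] ≤ 2·∑_{i=1}^n X_i + 4·B·log(2n/δ). -/
open MeasureTheory Finset

/-!
Write `Cₙ = E[Xₙ | ℱₙ₋₁]`. Since `exp (-y) ≤ 1 - y / 2` on `[0, 1]`, conditional expectation gives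
`E[exp (-Xₙ / B) | ℱₙ₋₁] ≤ 1 - Cₙ / (2B) ≤ exp (-Cₙ / (2B))`, so
`Mₙ = exp (∑ᵢ₌₁ⁿ Cᵢ / (2B) - ∑ᵢ₌₁ⁿ Xᵢ / B)` is a nonnegative supermartingale with `M₀ = 1`.
If the bound fails at time `n` then `Mₙ ≥ (2n/δ)²`, which by Markov's inequality has probability
at most `δ² / (4n²)`; a union bound over `n` costs `δ² π² / 24 ≤ δ`.
-/

theorem Real.exp_neg_le_one_sub_half {y : ℝ} (h0 : 0 ≤ y) (h1 : y ≤ 1) :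
    Real.exp (-y) ≤ 1 - y / 2 := by
  have hrecip : Real.exp (-y) * (1 + y) ≤ 1 :=
    calc Real.exp (-y) * (1 + y) ≤ Real.exp (-y) * Real.exp y := by
          gcongr; linarith [Real.add_one_le_exp y]
      _ = 1 := by rw [← Real.exp_add, neg_add_cancel, Real.exp_zero]
  nlinarith [Real.exp_pos (-y), mul_nonneg h0 (sub_nonneg.2 h1)]

section CondExp

variable {Ω : Type*} {m m0 : MeasurableSpace Ω} {μ : Measure Ω} [IsFiniteMeasure μ]

theorem condExp_exp_neg_div_le {X : Ω → ℝ} {B : ℝ} (hm : m ≤ m0) (hB : 0 < B)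
    (hX : Integrable X μ) (hXB : ∀ᵐ ω ∂μ, X ω ∈ Set.Icc 0 B) :
    μ[fun ω => Real.exp (-X ω / B) | m] ≤ᵐ[μ]
      fun ω => Real.exp (-μ[X | m] ω / (2 * B)) := by
  set chord : Ω → ℝ := (fun _ => 1) - (2 * B)⁻¹ • X with hchord_def
  have hchord_int : Integrable chord μ := (integrable_const 1).sub (hX.smul _)
  have hle_chord : (fun ω => Real.exp (-X ω / B)) ≤ᵐ[μ] chord := by
    filter_upwards [hXB] with ω ⟨h0, h1⟩
    have := Real.exp_neg_le_one_sub_half (div_nonneg h0 hB.le) ((div_le_one hB).2 h1)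
    convert this using 2
    · ring
    · simp only [hchord_def, Pi.sub_apply, Pi.smul_apply, smul_eq_mul]; field_simp
  have hexp_int : Integrable (fun ω => Real.exp (-X ω / B)) μ :=
    hchord_int.mono' (by fun_prop) (by
      filter_upwards [hle_chord] with ω hω
      rwa [Real.norm_of_nonneg (Real.exp_pos _).le])
  filter_upwards [condExp_mono (m := m) hexp_int hchord_int hle_chord,
    condExp_sub (integrable_const 1) (hX.smul (2 * B)⁻¹) m,
    condExp_smul (2 * B)⁻¹ X m] with ω hmono hsub hsmul
  calc μ[fun ω => Real.exp (-X ω / B) | m] ω ≤ μ[chord | m] ω := hmono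
    _ = 1 - μ[X | m] ω / (2 * B) := by
        rw [hsub, Pi.sub_apply, hsmul, condExp_const hm]
        simp [div_eq_inv_mul]
    _ ≤ Real.exp (-μ[X | m] ω / (2 * B)) := by
        linarith [Real.add_one_le_exp (-μ[X | m] ω / (2 * B)), neg_div (2 * B) (μ[X | m] ω)]

end CondExp

section ExpSupermartingale

variable {Ω : Type*} {m0 : MeasurableSpace Ω}

noncomputable def expSupermartingale (μ : Measure Ω) (ℱ : Filtration ℕ m0) (X : ℕ → Ω → ℝ)
    (B : ℝ) (n : ℕ) (ω : Ω) : ℝ :=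
  Real.exp (∑ i ∈ Icc 1 n, (μ[X i | ℱ (i - 1)] ω / (2 * B) - X i ω / B))

variable {μ : Measure Ω} {ℱ : Filtration ℕ m0} {X : ℕ → Ω → ℝ} {B : ℝ}

theorem expSupermartingale_zero : expSupermartingale μ ℱ X B 0 = 1 := by
  ext ω; simp [expSupermartingale]

theorem expSupermartingale_succ (n : ℕ) (ω : Ω) :
    expSupermartingale μ ℱ X B (n + 1) ω = expSupermartingale μ ℱ X B n ω *
      Real.exp (μ[X (n + 1) | ℱ n] ω / (2 * B)) * Real.exp (-X (n + 1) ω / B) := by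
  rw [expSupermartingale, expSupermartingale, sum_Icc_succ_top (by omega), Real.exp_add,
    sub_eq_add_neg, Real.exp_add, Nat.add_sub_cancel, neg_div, mul_assoc]

theorem expSupermartingale_nonneg (n : ℕ) (ω : Ω) : 0 ≤ expSupermartingale μ ℱ X B n ω :=
  (Real.exp_pos _).le

theorem stronglyAdapted_expSupermartingale
    (hadapted : ∀ n, 1 ≤ n → StronglyMeasurable[ℱ n] (X n)) :
    StronglyAdapted ℱ (expSupermartingale μ ℱ X B) := by
  intro n
  refine Real.continuous_exp.comp_stronglyMeasurable
    (Finset.stronglyMeasurable_fun_sum _ fun i hi => ?_)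
  obtain ⟨hi1, hin⟩ := mem_Icc.mp hi
  have hC : StronglyMeasurable[ℱ n] (μ[X i | ℱ (i - 1)]) :=
    stronglyMeasurable_condExp.mono (ℱ.mono (by omega))
  have hX : StronglyMeasurable[ℱ n] (X i) := (hadapted i hi1).mono (ℱ.mono hin)
  fun_prop

theorem ae_expSupermartingale_le (hB : 0 < B) (hbdd : ∀ n, 1 ≤ n → ∀ᵐ ω ∂μ, X n ω ∈ Set.Icc 0 B)
    (n : ℕ) : ∀ᵐ ω ∂μ, expSupermartingale μ ℱ X B n ω ≤ Real.exp (n / 2) := by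
  have hterm : ∀ᵐ ω ∂μ, ∀ i ∈ Icc 1 n, μ[X i | ℱ (i - 1)] ω / (2 * B) - X i ω / B ≤ 1 / 2 := by
    refine (Filter.eventually_all_finset _).2 fun i hi => ?_
    have hi1 := (mem_Icc.mp hi).1
    filter_upwards [hbdd i hi1, condExp_le_nonneg_const (m := ℱ (i - 1)) hB.le
      (by filter_upwards [hbdd i hi1] with ω hω using hω.2)] with ω hX hC
    have : μ[X i | ℱ (i - 1)] ω / (2 * B) ≤ 1 / 2 := by
      rw [div_le_iff₀ (by positivity)]; linarith
    linarith [div_nonneg hX.1 hB.le]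
  filter_upwards [hterm] with ω hω
  refine Real.exp_le_exp.2 ((sum_le_card_nsmul _ _ _ hω).trans ?_)
  simp only [Nat.card_Icc, add_tsub_cancel_right, nsmul_eq_mul]
  linarith

theorem integrable_expSupermartingale [IsFiniteMeasure μ]
    (hadapted : ∀ n, 1 ≤ n → StronglyMeasurable[ℱ n] (X n)) (hB : 0 < B)
    (hbdd : ∀ n, 1 ≤ n → ∀ᵐ ω ∂μ, X n ω ∈ Set.Icc 0 B) (n : ℕ) :
    Integrable (expSupermartingale μ ℱ X B n) μ := by
  refine .of_bound ((stronglyAdapted_expSupermartingale hadapted n).mono (ℱ.le n)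
    |>.aestronglyMeasurable) (Real.exp (n / 2)) ?_
  filter_upwards [ae_expSupermartingale_le hB hbdd n] with ω hω
  rwa [Real.norm_of_nonneg (expSupermartingale_nonneg n ω)]

theorem supermartingale_expSupermartingale [IsFiniteMeasure μ]
    (hadapted : ∀ n, 1 ≤ n → StronglyMeasurable[ℱ n] (X n)) (hB : 0 < B)
    (hbdd : ∀ n, 1 ≤ n → ∀ᵐ ω ∂μ, X n ω ∈ Set.Icc 0 B) :
    Supermartingale (expSupermartingale μ ℱ X B) ℱ μ := by
  set M := expSupermartingale μ ℱ X B
  have hM_int := integrable_expSupermartingale (μ := μ) hadapted hB hbdd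
  refine supermartingale_nat (stronglyAdapted_expSupermartingale hadapted) hM_int fun n => ?_
  have hn : 1 ≤ n + 1 := Nat.le_add_left 1 n
  set C := μ[X (n + 1) | ℱ n]
  set past : Ω → ℝ := fun ω => M n ω * Real.exp (C ω / (2 * B))
  set next : Ω → ℝ := fun ω => Real.exp (-X (n + 1) ω / B)
  have hX_int : Integrable (X (n + 1)) μ := by
    refine .of_bound ((hadapted _ hn).mono (ℱ.le _)).aestronglyMeasurable B ?_
    filter_upwards [hbdd _ hn] with ω hω
    rw [Real.norm_of_nonneg hω.1]; exact hω.2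
  have hpast : StronglyMeasurable[ℱ n] past := by
    have hM : StronglyMeasurable[ℱ n] (M n) := stronglyAdapted_expSupermartingale hadapted n
    have hC : StronglyMeasurable[ℱ n] C := stronglyMeasurable_condExp
    fun_prop
  have hnext_int : Integrable next μ := by
    refine .of_bound (by fun_prop) 1 ?_
    filter_upwards [hbdd _ hn] with ω hω
    rw [Real.norm_of_nonneg (Real.exp_pos _).le, Real.exp_le_one_iff]
    exact div_nonpos_of_nonpos_of_nonneg (neg_nonpos.2 hω.1) hB.le
  have hsucc : M (n + 1) = past * next := funext (expSupermartingale_succ n)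
  filter_upwards
    [condExp_mul_of_stronglyMeasurable_left hpast (hsucc ▸ hM_int (n + 1)) hnext_int,
    condExp_exp_neg_div_le (ℱ.le n) hB hX_int (hbdd _ hn)] with ω hpull hnext
  calc μ[M (n + 1) | ℱ n] ω = past ω * μ[next | ℱ n] ω := by rw [hsucc, hpull, Pi.mul_apply]
    _ ≤ M n ω * Real.exp (C ω / (2 * B)) * Real.exp (-C ω / (2 * B)) :=
        mul_le_mul_of_nonneg_left hnext
          (mul_nonneg (expSupermartingale_nonneg n ω) (Real.exp_pos _).le)
    _ = M n ω := by
        rw [mul_assoc, ← Real.exp_add, neg_div, add_neg_cancel, Real.exp_zero, mul_one]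

theorem integral_expSupermartingale_le_one [IsProbabilityMeasure μ]
    (hadapted : ∀ n, 1 ≤ n → StronglyMeasurable[ℱ n] (X n)) (hB : 0 < B)
    (hbdd : ∀ n, 1 ≤ n → ∀ᵐ ω ∂μ, X n ω ∈ Set.Icc 0 B) (n : ℕ) :
    ∫ ω, expSupermartingale μ ℱ X B n ω ∂μ ≤ 1 := by
  have := (supermartingale_expSupermartingale hadapted hB hbdd).setIntegral_le (Nat.zero_le n)
    MeasurableSet.univ
  simpa [expSupermartingale_zero] using this

theorem sq_le_expSupermartingale_of_le {L : ℝ} (hB : 0 < B) (hL : 0 < L) {n : ℕ} {ω : Ω}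
    (h : 2 * ∑ i ∈ Icc 1 n, X i ω + 4 * B * Real.log L ≤ ∑ i ∈ Icc 1 n, μ[X i | ℱ (i - 1)] ω) :
    L ^ 2 ≤ expSupermartingale μ ℱ X B n ω := by
  rw [expSupermartingale, ← Real.exp_log (pow_pos hL 2), Real.exp_le_exp, Real.log_pow,
    sum_sub_distrib, ← sum_div, ← sum_div, div_sub_div _ _ (by positivity) hB.ne',
    le_div_iff₀ (by positivity)]
  push_cast
  nlinarith

end ExpSupermartingale

section Probability

variable {Ω : Type*} {m0 : MeasurableSpace Ω} {μ : Measure Ω}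

theorem measure_ge_le_ofReal_inv [IsFiniteMeasure μ] {f : Ω → ℝ} (hf_nonneg : 0 ≤ᵐ[μ] f)
    (hf_int : Integrable f μ) (hf_le : ∫ ω, f ω ∂μ ≤ 1) {ε : ℝ} (hε : 0 < ε) :
    μ {ω | ε ≤ f ω} ≤ ENNReal.ofReal ε⁻¹ := by
  rw [← ofReal_measureReal]
  refine ENNReal.ofReal_le_ofReal ?_
  rw [inv_eq_one_div, le_div_iff₀' hε]
  linarith [mul_meas_ge_le_integral_of_nonneg hf_nonneg hf_int ε]

theorem measure_exists_sq_div_le_le [IsFiniteMeasure μ] {M : ℕ → Ω → ℝ}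
    (hM_nonneg : ∀ n, 0 ≤ᵐ[μ] M n) (hM_int : ∀ n, Integrable (M n) μ)
    (hM_le : ∀ n, ∫ ω, M n ω ∂μ ≤ 1)
    {δ : ℝ} (hδ0 : 0 < δ) (hδ1 : δ ≤ 1) :
    μ {ω | ∃ n : ℕ, 1 ≤ n ∧ (2 * n / δ) ^ 2 ≤ M n ω} ≤ ENNReal.ofReal δ := by
  have hmarkov (n : ℕ) : μ {ω | 1 ≤ n ∧ (2 * n / δ) ^ 2 ≤ M n ω} ≤
      ENNReal.ofReal (δ ^ 2 / 4 * (1 / (n : ℝ) ^ 2)) := by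
    rcases Nat.eq_zero_or_pos n with rfl | hn
    · simp
    simp only [Nat.one_le_iff_ne_zero.2 hn.ne', true_and]
    convert measure_ge_le_ofReal_inv (hM_nonneg n) (hM_int n) (hM_le n)
      (ε := (2 * n / δ) ^ 2) (by positivity) using 2
    field_simp
    ring
  have hsum : HasSum (fun n : ℕ => δ ^ 2 / 4 * (1 / (n : ℝ) ^ 2))
      (δ ^ 2 / 4 * (Real.pi ^ 2 / 6)) :=
    hasSum_zeta_two.mul_left _
  calc μ {ω | ∃ n : ℕ, 1 ≤ n ∧ (2 * n / δ) ^ 2 ≤ M n ω}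
      = μ (⋃ n : ℕ, {ω | 1 ≤ n ∧ (2 * n / δ) ^ 2 ≤ M n ω}) := by rw [Set.ofPred_exists]
    _ ≤ ∑' n : ℕ, μ {ω | 1 ≤ n ∧ (2 * n / δ) ^ 2 ≤ M n ω} := measure_iUnion_le _
    _ ≤ ∑' n : ℕ, ENNReal.ofReal (δ ^ 2 / 4 * (1 / (n : ℝ) ^ 2)) := ENNReal.tsum_le_tsum hmarkov
    _ = ENNReal.ofReal (δ ^ 2 / 4 * (Real.pi ^ 2 / 6)) := by
        rw [← ENNReal.ofReal_tsum_of_nonneg (fun n => by positivity) hsum.summable, hsum.tsum_eq]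
    _ ≤ ENNReal.ofReal δ := by
        refine ENNReal.ofReal_le_ofReal ?_
        have hpi : Real.pi ^ 2 ≤ 16 := by nlinarith [Real.pi_le_four, Real.pi_pos]
        nlinarith [mul_le_mul_of_nonneg_left hpi (sq_nonneg δ)]

theorem ofReal_one_sub_le_of_measure_compl_le [IsProbabilityMeasure μ] {s : Set Ω} {δ : ℝ}
    (hδ : 0 ≤ δ) (h : μ sᶜ ≤ ENNReal.ofReal δ) : ENNReal.ofReal (1 - δ) ≤ μ s := by
  rw [ENNReal.ofReal_sub 1 hδ, ENNReal.ofReal_one, tsub_le_iff_right]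
  calc 1 = μ Set.univ := measure_univ.symm
    _ ≤ μ s + μ sᶜ := measure_univ_le_add_compl s
    _ ≤ μ s + ENNReal.ofReal δ := by gcongr

end Probability

/-- Multiplicative anytime bound for adapted sequences of bounded nonnegative
random variables: with probability at least `1 - δ`, simultaneously for all `n`,
`∑_{i=1}^n E[X_i | F_{i-1}] ≤ 2 ∑_{i=1}^n X_i + 4 B log(2n/δ)`. -/
theorem multiplicative_anytime_bound
    {Ω : Type*} {m0 : MeasurableSpace Ω} {μ : Measure Ω} [IsProbabilityMeasure μ]
    (ℱ : Filtration ℕ m0) (X : ℕ → Ω → ℝ)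
    (hadapted : ∀ n, 1 ≤ n → StronglyMeasurable[ℱ n] (X n))
    (B : ℝ) (hB : 0 < B)
    (hbdd : ∀ n, 1 ≤ n → ∀ᵐ ω ∂μ, X n ω ∈ Set.Icc 0 B)
    (δ : ℝ) (hδ0 : 0 < δ) (hδ1 : δ < 1) :
    ENNReal.ofReal (1 - δ) ≤
      μ {ω | ∀ n : ℕ, 1 ≤ n →
        ∑ i ∈ Finset.Icc 1 n, (μ[X i | ℱ (i - 1)]) ω ≤
          2 * ∑ i ∈ Finset.Icc 1 n, X i ω + 4 * B * Real.log (2 * n / δ)} := by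
  have hbad := measure_exists_sq_div_le_le (μ := μ) (M := expSupermartingale μ ℱ X B)
    (fun n => ae_of_all _ (expSupermartingale_nonneg n))
    (integrable_expSupermartingale hadapted hB hbdd)
    (integral_expSupermartingale_le_one hadapted hB hbdd) hδ0 hδ1.le
  refine ofReal_one_sub_le_of_measure_compl_le hδ0.le ((measure_mono fun ω hω => ?_).trans hbad)
  simp only [Set.mem_compl_iff, Set.mem_ofPred_eq, not_forall, not_le] at hω
  obtain ⟨n, hn, hlt⟩ := hω
  exact ⟨n, hn, sq_le_expSupermartingale_of_le hB (by positivity) hlt.le⟩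
end
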